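/- Let b ≥ 2 be an integer and S a non-empty finite set of primes none of which divides b. Let X ⊆ ℤ_S ∩ [0,1) be an infinite set of S-integers. Then the set Orb_{T_b}(X) = {b^k x (mod 1) : x ∈ X, k ≥ 0} is dense in [0,1]. -/

import Mathlib

/-- The map `T_b : x ↦ bx (mod 1)`, i.e. the fractional part of `bx`. -/
noncomputable def Tb (b : ℕ) (x : ℝ) : ℝ := Int.fract ((b : ℝ) * x)

/-!
Replace `b` by a power `t = b ^ N` with `p ^ 2 ∣ t - 1` for every `p ∈ S`. For `x = a / q` in
lowest terms with the primes of `q` in `S`, put `M = gcd(q, t - 1)`. Lifting the exponent shows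
that `t` has order `q / M` modulo `q`, so its powers are exactly the residues `≡ 1 (mod M)`, and
the orbit of `x` contains every `c / q` with `c ≡ a (mod M)`: an `M / q`-net of `[0, 1)`.
Since `M ≤ t - 1` while the denominators in the infinite set `X` are unbounded, the orbit of `X`
is dense.
-/

theorem Nat.Prime.not_dvd_of_dvd_sub_one {p t : ℕ} (hp : p.Prime) (ht : 0 < t) (h : p ∣ t - 1) :
    ¬ p ∣ t :=
  hp.coprime_iff_not_dvd.1 <|
    Nat.Coprime.coprime_dvd_left h ((Nat.coprime_self_sub_left ht).2 (Nat.coprime_one_left t))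

/-- Lifting the exponent; `p ^ 2` rather than `p` is what makes it hold for `p = 2` as well. -/
theorem Nat.emultiplicity_pow_sub_one {p t : ℕ} (hp : p.Prime) (ht : 0 < t)
    (h : p ^ 2 ∣ t - 1) (d : ℕ) :
    emultiplicity p (t ^ d - 1) = emultiplicity p (t - 1) + emultiplicity p d := by
  have hpt : ¬ p ∣ t := hp.not_dvd_of_dvd_sub_one ht ((dvd_pow_self p two_ne_zero).trans h)
  rcases hp.eq_two_or_odd' with rfl | hodd
  · have h4 : (4 : ℤ) ∣ t - 1 := by simpa [Int.natCast_sub ht] using Int.natCast_dvd_natCast.2 h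
    have h2 : ¬ (2 : ℤ) ∣ t := by exact_mod_cast hpt
    iterate 3 rw [← Int.natCast_emultiplicity]
    push_cast [Nat.one_le_pow _ _ ht, ht]
    simpa using Int.two_pow_sub_pow' d h4 h2
  · simpa using
      Nat.emultiplicity_pow_sub_pow hp hodd (y := 1) ((dvd_pow_self p two_ne_zero).trans h) hpt d

theorem Nat.dvd_sub_one_mul_of_dvd_pow_sub_one {q t d : ℕ} (ht : 0 < t)
    (hq : ∀ p, p.Prime → p ∣ q → p ^ 2 ∣ t - 1) (h : q ∣ t ^ d - 1) : q ∣ (t - 1) * d := by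
  refine (Nat.dvd_iff_prime_pow_dvd_dvd _ _).2 fun p k hp hpk => ?_
  rcases k.eq_zero_or_pos with rfl | hk
  · simp
  have hpq : p ∣ q := (dvd_pow_self p hk.ne').trans hpk
  rw [pow_dvd_iff_le_emultiplicity, Nat.Prime.emultiplicity_mul hp,
    ← Nat.emultiplicity_pow_sub_one hp ht (hq p hp hpq)]
  exact pow_dvd_iff_le_emultiplicity.1 (hpk.trans h)

theorem Nat.exists_pow_sub_one_dvd {ι : Type*} {b : ℕ} (s : Finset ι) (m : ι → ℕ)
    (hm : ∀ i ∈ s, m i ≠ 0 ∧ b.Coprime (m i)) : ∃ N ≠ 0, ∀ i ∈ s, m i ∣ b ^ N - 1 := by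
  have hK : ∏ i ∈ s, m i ≠ 0 := Finset.prod_ne_zero_iff.2 fun i hi => (hm i hi).1
  refine ⟨(∏ i ∈ s, m i).totient, (Nat.totient_pos.2 (Nat.pos_of_ne_zero hK)).ne', fun i hi => ?_⟩
  have hcop : b.Coprime (∏ i ∈ s, m i) := Nat.Coprime.prod_right fun i hi => (hm i hi).2
  exact (Finset.dvd_prod_of_mem m hi).trans
    (Nat.dvd_of_mod_eq_zero (Nat.sub_mod_eq_zero_of_mod_eq (Nat.ModEq.pow_totient hcop)))

theorem ZMod.div_gcd_sub_one_dvd_orderOf {q t : ℕ} (ht : 1 < t)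
    (hq : ∀ p, p.Prime → p ∣ q → p ^ 2 ∣ t - 1) :
    q / q.gcd (t - 1) ∣ orderOf (t : ZMod q) := by
  rcases eq_or_ne (orderOf (t : ZMod q)) 0 with h0 | h0
  · simp [h0]
  have hdvd : q ∣ t ^ orderOf (t : ZMod q) - 1 := by
    rw [← ZMod.natCast_eq_zero_iff, Nat.cast_sub (Nat.one_le_pow _ _ (by lia))]
    simp [pow_orderOf_eq_one]
  rw [Nat.div_dvd_iff_dvd_mul (Nat.gcd_dvd_left _ _) (Nat.gcd_pos_of_pos_right _ (by lia)),
    Nat.dvd_gcd_mul_iff_dvd_mul]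
  exact Nat.dvd_sub_one_mul_of_dvd_pow_sub_one (by lia) hq hdvd

theorem ZMod.exists_pow_eq_one_add_gcd_mul {q t : ℕ} [NeZero q] (ht : 1 < t)
    (hq : ∀ p, p.Prime → p ∣ q → p ^ 2 ∣ t - 1) (s : ZMod q) :
    ∃ j, (t : ZMod q) ^ j = 1 + q.gcd (t - 1) * s := by
  set M := q.gcd (t - 1)
  set n := q / M
  have hMn : M * n = q := Nat.mul_div_cancel' (Nat.gcd_dvd_left _ _)
  have hn : 0 < n := Nat.pos_of_ne_zero fun h => NeZero.ne q (by simp [← hMn, h])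
  have hmod (k : ℕ) : (M : ZMod q) * (k % n : ℕ) = M * k := by
    have hq0 : ((M * n : ℕ) : ZMod q) = 0 := hMn ▸ ZMod.natCast_self q
    conv_rhs => rw [← Nat.mod_add_div k n]
    push_cast at hq0 ⊢
    linear_combination -(k / n : ℕ) * hq0
  have hcop : t.Coprime q := Nat.coprime_of_dvd fun p hp hpt hpq =>
    hp.not_dvd_of_dvd_sub_one (by lia) ((dvd_pow_self p two_ne_zero).trans (hq p hp hpq)) hpt
  have horder : n ≤ orderOf (t : ZMod q) :=
    Nat.le_of_dvd (orderOf_pos_iff.2 ((ZMod.isUnit_iff_coprime t q).2 hcop).isOfFinOrder)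
      (ZMod.div_gcd_sub_one_dvd_orderOf ht hq)
  -- `t ^ j` for `j < n` are `n` distinct elements of the `≤ n`-element set `1 + M * ℤ/q`.
  set A := (Finset.range n).image ((t : ZMod q) ^ ·)
  set B := (Finset.range n).image fun k : ℕ => 1 + (M : ZMod q) * k
  have hAB : A ⊆ B := by
    simp only [A, B, Finset.image_subset_iff, Finset.mem_image, Finset.mem_range]
    intro j _
    obtain ⟨w, hw⟩ :=
      (Nat.gcd_dvd_right q (t - 1)).trans (by simpa using Nat.sub_dvd_pow_sub_pow t 1 j)
    refine ⟨w % n, Nat.mod_lt _ hn, ?_⟩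
    rw [hmod, ← Nat.cast_pow, Nat.eq_add_of_sub_eq (Nat.one_le_pow _ _ (by lia)) hw]
    push_cast
    ring
  have hcard : B.card ≤ A.card := calc
    B.card ≤ n := Finset.card_image_le.trans (Finset.card_range n).le
    _ = A.card := by
      rw [Finset.card_image_of_injOn, Finset.card_range]
      exact pow_injOn_Iio_orderOf.mono fun j hj => (Finset.mem_range.1 hj).trans_le horder
  have hs : 1 + (M : ZMod q) * s ∈ A := by
    rw [Finset.eq_of_subset_of_card_le hAB hcard]
    exact Finset.mem_image.2 ⟨s.val % n, Finset.mem_range.2 (Nat.mod_lt _ hn), by simp [hmod]⟩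
  obtain ⟨j, -, hj⟩ := Finset.mem_image.1 hs
  exact ⟨j, hj⟩

theorem exists_lt_abs_mul_sub_le {M n : ℕ} (hn : 0 < n) {ρ : ℝ} (hρ₀ : 0 ≤ ρ) (hρ : ρ ≤ M)
    {y : ℝ} (hy : y ∈ Set.Ico 0 1) : ∃ i < n, |y * (M * n) - (ρ + M * i)| ≤ M := by
  have hyn : 0 ≤ y * n := mul_nonneg hy.1 n.cast_nonneg
  have hn' : (0 : ℝ) < n := Nat.cast_pos.2 hn
  refine ⟨⌊y * n⌋₊, (Nat.floor_lt hyn).2 (by nlinarith [hy.2]), ?_⟩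
  have h₁ := Nat.floor_le hyn
  have h₂ := Nat.lt_floor_add_one (y * n)
  have hM : (0 : ℝ) ≤ M := M.cast_nonneg
  rw [abs_le]
  constructor <;> nlinarith

theorem ZMod.exists_pow_mul_eq_add_gcd_mul {q t : ℕ} [NeZero q] (ht : 1 < t)
    (hq : ∀ p, p.Prime → p ∣ q → p ^ 2 ∣ t - 1) {a : ℤ} (ha : IsCoprime a q) (c : ℤ) :
    ∃ j, ((t ^ j * a : ℤ) : ZMod q) = a + q.gcd (t - 1) * c := by
  obtain ⟨j, hj⟩ := ZMod.exists_pow_eq_one_add_gcd_mul ht hq (c * (a : ZMod q)⁻¹)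
  refine ⟨j, ?_⟩
  push_cast
  rw [hj]
  linear_combination (q.gcd (t - 1) * (c : ZMod q)) * ZMod.coe_int_mul_inv_eq_one ha

theorem exists_abs_sub_fract_pow_mul_le {t : ℕ} (ht : 1 < t) (r : ℚ)
    (hr : ∀ p, p.Prime → p ∣ r.den → p ^ 2 ∣ t - 1) {y : ℝ} (hy : y ∈ Set.Ico 0 1) :
    ∃ j, |y - Int.fract ((t : ℝ) ^ j * r)| ≤ r.den.gcd (t - 1) / r.den := by
  set q := r.den
  set M := q.gcd (t - 1)
  set n := q / M
  set a := r.num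
  have : NeZero q := ⟨r.den_nz⟩
  have hMn : M * n = q := Nat.mul_div_cancel' (Nat.gcd_dvd_left _ _)
  have hM : 0 < M := Nat.gcd_pos_of_pos_left _ r.den_pos
  have hn : 0 < n := Nat.pos_of_ne_zero fun h => r.den_nz (by simp [q, ← hMn, h])
  have hρ₀ : 0 ≤ a % M := Int.emod_nonneg _ (by exact_mod_cast hM.ne')
  have hρ : a % M < M := Int.emod_lt_of_pos _ (by exact_mod_cast hM)
  obtain ⟨i, hin, hi⟩ := exists_lt_abs_mul_sub_le hn (ρ := (a % M : ℤ)) (by exact_mod_cast hρ₀)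
    (by exact_mod_cast hρ.le) hy
  set z : ℤ := a % M + M * i
  have hyz : |y * q - z| ≤ M := by
    rw [← hMn]
    push_cast [z]
    exact hi
  have hz : z < q := by
    have : (M : ℤ) * (i + 1) ≤ M * n := by exact_mod_cast Nat.mul_le_mul_left M hin
    rw [← hMn]
    push_cast
    linarith
  obtain ⟨j, hj⟩ := ZMod.exists_pow_mul_eq_add_gcd_mul ht hr (Rat.isCoprime_num_den r) (i - a / M)
  have hjz : (t ^ j * a) % (q : ℤ) = z := by
    have hz_eq : a + M * (i - a / M) = z := by linarith [Int.mul_ediv_add_emod a M]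
    rw [← Int.emod_eq_of_lt (by positivity) hz, ← ZMod.intCast_eq_intCast_iff', hj, ← hz_eq]
    push_cast
    rfl
  have hq : (0 : ℝ) < q := Nat.cast_pos.2 r.den_pos
  refine ⟨j, ?_⟩
  rw [show (t : ℝ) ^ j * r = ((t ^ j * a : ℤ) : ℝ) / q by push_cast [Rat.cast_def]; ring,
    Int.fract_div_intCast_eq_div_intCast_mod, hjz]
  calc |y - z / q| = |y * q - z| / q := by rw [sub_div' hq.ne', abs_div, abs_of_pos hq]
    _ ≤ M / q := by gcongr

theorem exists_mem_forall_den_gt {X : Set ℝ} (hX : X ⊆ Set.Ico 0 1) (hX' : X.Infinite) (Q : ℕ) :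
    ∃ x ∈ X, ∀ r : ℚ, (r : ℝ) = x → Q < r.den := by
  let F : Finset ℝ := (Finset.range (Q + 1) ×ˢ Finset.range (Q + 1)).image fun k => (k.1 : ℝ) / k.2
  obtain ⟨x, hxX, hxF⟩ := (hX'.sdiff F.finite_toSet).nonempty
  refine ⟨x, hxX, fun r hr => not_le.1 fun hden => hxF ?_⟩
  have h₀ : 0 ≤ r.num := Rat.num_nonneg.2 (by exact_mod_cast hr ▸ (hX hxX).1)
  have h₁ : r.num < r.den := Rat.num_lt_denom_iff.2 (by exact_mod_cast hr ▸ (hX hxX).2)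
  refine Finset.mem_image.2 ⟨(r.num.toNat, r.den), by simp; lia, ?_⟩
  rw [← hr, Rat.cast_def, ← Int.toNat_of_nonneg h₀]
  rfl

theorem stmt15_general (b : ℕ) (hb : 2 ≤ b) (S : Finset ℕ)
    (hSp : ∀ p ∈ S, Nat.Prime p ∧ ¬ p ∣ b)
    (X : Set ℝ) (hX1 : X ⊆ Set.Ico 0 1)
    (hX2 : ∀ x ∈ X, ∃ q : ℚ, (q : ℝ) = x ∧ ∀ p : ℕ, p.Prime → p ∣ q.den → p ∈ S)
    (hXinf : X.Infinite) :
    Set.Icc (0 : ℝ) 1 ⊆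
      closure {y : ℝ | ∃ x ∈ X, ∃ k : ℕ, y = Int.fract ((b : ℝ) ^ k * x)} := by
  rw [← closure_Ico (zero_ne_one' ℝ)]
  refine closure_minimal (fun y hy => Metric.mem_closure_iff.2 fun ε hε => ?_) isClosed_closure
  obtain ⟨N, hN, hbN⟩ := Nat.exists_pow_sub_one_dvd S (· ^ 2) fun p hp =>
    ⟨pow_ne_zero 2 (hSp p hp).1.ne_zero,
      (Nat.coprime_comm.1 ((hSp p hp).1.coprime_iff_not_dvd.2 (hSp p hp).2)).pow_right 2⟩
  have ht : 1 < b ^ N := Nat.one_lt_pow hN (by lia)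
  obtain ⟨x, hxX, hden⟩ := exists_mem_forall_den_gt hX1 hXinf ⌈((b ^ N - 1 : ℕ) : ℝ) / ε⌉₊
  obtain ⟨r, rfl, hrS⟩ := hX2 x hxX
  obtain ⟨j, hj⟩ := exists_abs_sub_fract_pow_mul_le ht r (fun p hp hpr => hbN p (hrS p hp hpr)) hy
  refine ⟨_, ⟨r, hxX, N * j, rfl⟩, ?_⟩
  have hq : (0 : ℝ) < r.den := Nat.cast_pos.2 r.den_pos
  rw [Real.dist_eq, pow_mul]
  push_cast at hj
  calc _ ≤ (r.den.gcd (b ^ N - 1) : ℝ) / r.den := hj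
    _ ≤ ((b ^ N - 1 : ℕ) : ℝ) / r.den := by gcongr; exact Nat.gcd_le_right _ (by lia)
    _ < ε := by
      rw [div_lt_iff₀ hq, ← div_lt_iff₀' hε]
      exact (Nat.le_ceil _).trans_lt (by exact_mod_cast hden r rfl)

theorem stmt15 (b : ℕ) (hb : 2 ≤ b) (S : Finset ℕ) (hS : S.Nonempty)
    (hSp : ∀ p ∈ S, Nat.Prime p ∧ ¬ p ∣ b)
    (X : Set ℝ) (hX1 : X ⊆ Set.Ico 0 1)
    (hX2 : ∀ x ∈ X, ∃ q : ℚ, (q : ℝ) = x ∧ ∀ p : ℕ, p.Prime → p ∣ q.den → p ∈ S)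
    (hXinf : X.Infinite) :
    Set.Icc (0 : ℝ) 1 ⊆
      closure {y : ℝ | ∃ x ∈ X, ∃ k : ℕ, y = Int.fract ((b : ℝ) ^ k * x)} :=
  stmt15_general b hb S hSp X hX1 hX2 hXinf
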